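/- Let μ be a positive measure on the unit disc such that the top half of every dyadic Carleson square has μ-measure at least τ times the μ-measure of the square, where 0 < τ < 1. Let b, d be nonnegative functions constant on top halves of dyadic Carleson squares satisfying b(T) ≤ b(T(P(C))) + d(T) for every square C with top half T and parent P(C) (with the parent term interpreted as 0 for the root). Let B, D be the ancestral maxima of b, d. Then for all λ > 0, α > 1, γ > 0, and every maximal Carleson square C on whose top half B ≥ λ (and whose parent's top half has B < λ): μ{z ∈ C : B(z) ≥ αλ and D(z) ≤ γλ} ≤ (1-τ)^{⌈(α-1)/γ⌉ - 1}·μ(C). -/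

import Mathlib

open MeasureTheory
open scoped NNReal ENNReal

/-- The dyadic Carleson square at level `n` with angular index `k` (`k < 2^n`). -/
def carlesonSq (n k : ℕ) : Set ℂ :=
  {z : ℂ | 1 - (2:ℝ) ^ (-(n:ℤ)) ≤ ‖z‖ ∧ ‖z‖ < 1 ∧
    ∃ θ : ℝ, z = ((‖z‖ : ℝ) : ℂ) * Complex.exp ((θ : ℂ) * Complex.I) ∧
      2 * Real.pi * k / 2 ^ n ≤ θ ∧ θ < 2 * Real.pi * (k + 1) / 2 ^ n}

/-- The top half of the dyadic Carleson square. -/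
def carlesonTop (n k : ℕ) : Set ℂ :=
  {z ∈ carlesonSq n k | ‖z‖ < 1 - (2:ℝ) ^ (-(n:ℤ) - 1)}

/-!
Let `C` be the maximal square and `g = ⌈(α - 1)/γ⌉ - 1`. Following the chain of ancestors of a
top half `T`, the recursion `b(T) ≤ b(T(P(C))) + d(T)` lets `b` grow by at most `D(T)` per
generation, and on the strict ancestors of `C` it stays below `λ`. So on the top half of a
descendant of `C` of depth `j` we get `B < λ + (j + 1) D`, which is `< αλ` when `D ≤ γλ` and
`j < g`. Hence the set in question misses these top halves and lies in the union of the
descendants of `C` of depth `g`. Passing from a square to its two children discards its top half,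
which carries at least the fraction `τ` of its measure, so that union has measure at most
`(1 - τ)^g μ(C)`.
-/

open Complex Set

/-- `Complex.arg` takes values in `(-π, π]`; the squares are parametrised by angles in `[0, 2π)`. -/
noncomputable def argIco (z : ℂ) : ℝ := toIcoMod Real.two_pi_pos 0 (arg z)

lemma measurable_argIco : Measurable argIco := by
  have : argIco = fun z => Int.fract (arg z / (2 * Real.pi)) * (2 * Real.pi) := by
    funext z; exact toIcoMod_eq_fract_mul _ _
  rw [this]
  exact ((measurable_arg.div_const _).fract).mul_const _

lemma argIco_real_mul_exp {r θ : ℝ} (hr : 0 < r) (hθ : θ ∈ Ico 0 (2 * Real.pi)) :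
    argIco (r * exp (θ * I)) = θ := by
  rw [argIco, arg_real_mul _ hr, arg_exp_mul_I, toIcoMod_toIocMod, toIcoMod_eq_self, zero_add]
  exact hθ

lemma norm_mul_exp_argIco (z : ℂ) : (‖z‖ : ℂ) * exp (argIco z * I) = z := by
  rw [argIco, toIcoMod, ofReal_sub, ofReal_zsmul, ofReal_mul, ofReal_ofNat,
    exp_mul_I_periodic.sub_zsmul_eq, norm_mul_exp_arg_mul_I]

lemma mem_carlesonSq_iff {n k : ℕ} (hk : k < 2 ^ n) {z : ℂ} :
    z ∈ carlesonSq n k ↔ 1 - (2:ℝ) ^ (-(n:ℤ)) ≤ ‖z‖ ∧ ‖z‖ < 1 ∧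
      (z = 0 ∨ argIco z ∈ Ico (2 * Real.pi * k / 2 ^ n) (2 * Real.pi * (k + 1) / 2 ^ n)) := by
  have hk' : (k + 1 : ℝ) ≤ 2 ^ n := by exact_mod_cast hk
  have hsub : Ico (2 * Real.pi * k / 2 ^ n) (2 * Real.pi * (k + 1) / 2 ^ n) ⊆
      Ico 0 (2 * Real.pi) :=
    Ico_subset_Ico (by positivity) (div_le_of_le_mul₀ (by positivity) Real.two_pi_pos.le
      (mul_le_mul_of_nonneg_left hk' Real.two_pi_pos.le))
  refine and_congr_right fun _ => and_congr_right fun _ => ⟨?_, ?_⟩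
  · rintro ⟨θ, hz, hθ⟩
    rcases eq_or_ne z 0 with h | h
    · exact Or.inl h
    · rw [hz, argIco_real_mul_exp (norm_pos_iff.mpr h) (hsub hθ)]
      exact Or.inr hθ
  · rintro (h | h)
    · refine ⟨_, by simp [h], le_rfl, ?_⟩
      gcongr
      exact lt_add_one _
    · exact ⟨argIco z, (norm_mul_exp_argIco z).symm, h⟩

lemma measurableSet_carlesonSq {n k : ℕ} (hk : k < 2 ^ n) : MeasurableSet (carlesonSq n k) := by
  have h : carlesonSq n k = {z : ℂ | 1 - (2:ℝ) ^ (-(n:ℤ)) ≤ ‖z‖} ∩ ({z : ℂ | ‖z‖ < 1} ∩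
      ({0} ∪ argIco ⁻¹' Ico (2 * Real.pi * k / 2 ^ n) (2 * Real.pi * (k + 1) / 2 ^ n))) := by
    ext z; exact mem_carlesonSq_iff hk
  rw [h]
  exact (measurableSet_le measurable_const measurable_norm).inter
    ((measurableSet_lt measurable_norm measurable_const).inter
      ((measurableSet_singleton 0).union (measurable_argIco measurableSet_Ico)))

lemma measurableSet_carlesonTop {n k : ℕ} (hk : k < 2 ^ n) : MeasurableSet (carlesonTop n k) :=
  (measurableSet_carlesonSq hk).inter (measurableSet_lt measurable_norm measurable_const)

lemma carlesonSq_diff_carlesonTop {n k : ℕ} (hk : k < 2 ^ n) :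
    carlesonSq n k \ carlesonTop n k =
      carlesonSq (n + 1) (2 * k) ∪ carlesonSq (n + 1) (2 * k + 1) := by
  have hk₀ : 2 * k < 2 ^ (n + 1) := by omega
  have hk₁ : 2 * k + 1 < 2 ^ (n + 1) := by omega
  have hrad : (2:ℝ) ^ (-((n + 1 : ℕ) : ℤ)) = 2 ^ (-(n:ℤ) - 1) := by push_cast; ring_nf
  have hrad_le : (2:ℝ) ^ (-(n:ℤ) - 1) ≤ 2 ^ (-(n:ℤ)) := zpow_le_zpow_right₀ one_le_two (by omega)
  have hIco : Ico (2 * Real.pi * k / 2 ^ n) (2 * Real.pi * (k + 1) / 2 ^ n) =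
      Ico (2 * Real.pi * (2 * k : ℕ) / 2 ^ (n + 1))
        (2 * Real.pi * ((2 * k : ℕ) + 1) / 2 ^ (n + 1)) ∪
      Ico (2 * Real.pi * (2 * k + 1 : ℕ) / 2 ^ (n + 1))
        (2 * Real.pi * ((2 * k + 1 : ℕ) + 1) / 2 ^ (n + 1)) := by
    have hpow : (2:ℝ) ^ (n + 1) = 2 * 2 ^ n := pow_succ' 2 n
    push_cast
    rw [Ico_union_Ico_eq_Ico, hpow]
    · congr 1
      · field_simp
      · field_simp; ring
    · gcongr; linarith
    · gcongr; linarith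
  ext z
  simp only [mem_sdiff, mem_union, carlesonTop, mem_ofPred_eq, mem_carlesonSq_iff hk,
    mem_carlesonSq_iff hk₀, mem_carlesonSq_iff hk₁, hIco, hrad]
  have hinner : 1 - (2:ℝ) ^ (-(n:ℤ) - 1) ≤ ‖z‖ → 1 - 2 ^ (-(n:ℤ)) ≤ ‖z‖ := by intro; linarith
  rw [← not_le (b := ‖z‖) (a := 1 - 2 ^ (-(n:ℤ) - 1))]
  tauto

lemma disjoint_carlesonSq_two_mul {n k : ℕ} (hk : k < 2 ^ n) :
    Disjoint (carlesonSq (n + 1) (2 * k)) (carlesonSq (n + 1) (2 * k + 1)) := by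
  have hrad : (2:ℝ) ^ (-((n + 1 : ℕ) : ℤ)) < 1 := zpow_lt_one_of_neg₀ one_lt_two (by omega)
  rw [Set.disjoint_left]
  intro z hz₀ hz₁
  rw [mem_carlesonSq_iff (by omega)] at hz₀ hz₁
  have hz : z ≠ 0 := by
    rintro rfl
    linarith [hz₀.1, norm_zero (E := ℂ)]
  obtain ⟨-, -, hz₀ | ⟨-, hlt⟩⟩ := hz₀
  · exact hz hz₀
  obtain ⟨-, -, hz₁ | ⟨hle, -⟩⟩ := hz₁
  · exact hz hz₁
  push_cast at hlt hle
  linarith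

lemma measure_sdiff_le_ofReal_one_sub_mul {α : Type*} [MeasurableSpace α] {μ : Measure α}
    {s t : Set α} {τ : ℝ} (hτ : 0 ≤ τ) (ht : NullMeasurableSet t μ) (hts : t ⊆ s)
    (hs : μ s ≠ ∞) (h : ENNReal.ofReal τ * μ s ≤ μ t) :
    μ (s \ t) ≤ ENNReal.ofReal (1 - τ) * μ s := by
  rw [measure_sdiff hts ht (ne_top_of_le_ne_top hs (measure_mono hts)),
    ENNReal.ofReal_sub _ hτ, ENNReal.ofReal_one, ENNReal.sub_mul fun _ _ => hs, one_mul]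
  exact tsub_le_tsub_left h _

lemma measure_carlesonSq_two_mul_add_le (μ : Measure ℂ) {τ : ℝ} (hτ : 0 ≤ τ) {n k : ℕ}
    (hk : k < 2 ^ n) (hμ : ENNReal.ofReal τ * μ (carlesonSq n k) ≤ μ (carlesonTop n k))
    (hfin : μ (carlesonSq n k) ≠ ∞) :
    μ (carlesonSq (n + 1) (2 * k)) + μ (carlesonSq (n + 1) (2 * k + 1)) ≤
      ENNReal.ofReal (1 - τ) * μ (carlesonSq n k) := by
  rw [← measure_union (disjoint_carlesonSq_two_mul hk) (measurableSet_carlesonSq (by omega)),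
    ← carlesonSq_diff_carlesonTop hk]
  exact measure_sdiff_le_ofReal_one_sub_mul hτ (measurableSet_carlesonTop hk).nullMeasurableSet
    (fun _ hz => hz.1) hfin hμ

/-- The square `(n + j, k')` lies below `(n, k)` iff `k' / 2 ^ j = k`. -/
def carlesonDescendants (n k j : ℕ) : Set ℂ :=
  ⋃ (k' : ℕ) (_ : k' / 2 ^ j = k), carlesonSq (n + j) k'

lemma carlesonDescendants_zero (n k : ℕ) : carlesonDescendants n k 0 = carlesonSq n k := by
  simp [carlesonDescendants]

lemma carlesonDescendants_succ (n k j : ℕ) :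
    carlesonDescendants n k (j + 1) =
      carlesonDescendants (n + 1) (2 * k) j ∪ carlesonDescendants (n + 1) (2 * k + 1) j := by
  have hdiv (k' : ℕ) : k' / 2 ^ (j + 1) = k' / 2 ^ j / 2 := by
    rw [Nat.div_div_eq_div_mul, pow_succ]
  ext z
  simp only [carlesonDescendants, mem_union, mem_iUnion, hdiv, exists_prop,
    show n + (j + 1) = n + 1 + j by omega]
  constructor
  · rintro ⟨k', hk', hz⟩
    obtain h | h : k' / 2 ^ j = 2 * k ∨ k' / 2 ^ j = 2 * k + 1 := by omega
    exacts [Or.inl ⟨k', h, hz⟩, Or.inr ⟨k', h, hz⟩]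
  · rintro (⟨k', hk', hz⟩ | ⟨k', hk', hz⟩) <;> exact ⟨k', by omega, hz⟩

lemma lt_two_pow_add_of_div_eq {n k j k' : ℕ} (hk : k < 2 ^ n) (hk' : k' / 2 ^ j = k) :
    k' < 2 ^ (n + j) := by
  rw [pow_add, ← Nat.div_lt_iff_lt_mul (by positivity), hk']
  exact hk

lemma carlesonSq_diff_carlesonTop_subset_carlesonDescendants {n k j k' : ℕ} (hk : k < 2 ^ n)
    (hk' : k' / 2 ^ j = k) :
    carlesonSq (n + j) k' \ carlesonTop (n + j) k' ⊆ carlesonDescendants n k (j + 1) := by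
  rw [carlesonSq_diff_carlesonTop (lt_two_pow_add_of_div_eq hk hk')]
  rintro z (hz | hz) <;> refine mem_iUnion₂.mpr ⟨_, ?_, hz⟩
  · rw [pow_succ', ← Nat.div_div_eq_div_mul, show 2 * k' / 2 = k' by omega, hk']
  · rw [pow_succ', ← Nat.div_div_eq_div_mul, show (2 * k' + 1) / 2 = k' by omega, hk']

lemma measure_carlesonDescendants_le (μ : Measure ℂ) {τ : ℝ} (hτ : 0 ≤ τ)
    (hμ : ∀ n k : ℕ, k < 2 ^ n → ENNReal.ofReal τ * μ (carlesonSq n k) ≤ μ (carlesonTop n k))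
    (j : ℕ) : ∀ {n k : ℕ}, k < 2 ^ n → μ (carlesonSq n k) ≠ ∞ →
      μ (carlesonDescendants n k j) ≤ ENNReal.ofReal (1 - τ) ^ j * μ (carlesonSq n k) := by
  induction j with
  | zero => intro n k _ _; simp [carlesonDescendants_zero]
  | succ j ih =>
    intro n k hk hfin
    have hchild {k'} (h : carlesonSq (n + 1) k' ⊆ carlesonSq n k \ carlesonTop n k) :
        μ (carlesonSq (n + 1) k') ≠ ∞ :=
      ne_top_of_le_ne_top hfin (measure_mono (h.trans sdiff_subset))
    rw [carlesonSq_diff_carlesonTop hk] at hchild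
    calc μ (carlesonDescendants n k (j + 1))
        ≤ μ (carlesonDescendants (n + 1) (2 * k) j) +
            μ (carlesonDescendants (n + 1) (2 * k + 1) j) := by
          rw [carlesonDescendants_succ]; exact measure_union_le _ _
      _ ≤ ENNReal.ofReal (1 - τ) ^ j * μ (carlesonSq (n + 1) (2 * k)) +
            ENNReal.ofReal (1 - τ) ^ j * μ (carlesonSq (n + 1) (2 * k + 1)) :=
          add_le_add (ih (by omega) (hchild subset_union_left))
            (ih (by omega) (hchild subset_union_right))
      _ ≤ ENNReal.ofReal (1 - τ) ^ j * (ENNReal.ofReal (1 - τ) * μ (carlesonSq n k)) := by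
          rw [← mul_add]
          exact mul_le_mul_right (measure_carlesonSq_two_mul_add_le μ hτ hk (hμ n k hk) hfin) _
      _ = ENNReal.ofReal (1 - τ) ^ (j + 1) * μ (carlesonSq n k) := by ring

/-- The paper's ancestral maximum `B(T)` of `b` on the top half `T` of the square `(n, k)`. -/
def ancestralMax (b : ℕ → ℕ → ℝ≥0) (n k : ℕ) : ℝ≥0 :=
  (Finset.range (n + 1)).sup fun m => b m (k / 2 ^ (n - m))

lemma sup_range_lt_add_mul {β δ : ℕ → ℝ≥0} {lam c : ℝ≥0} {n j : ℕ} (hlam : 0 < lam)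
    (hroot : β 0 ≤ δ 0) (hstep : ∀ m < n + j, β (m + 1) ≤ β m + δ (m + 1))
    (hδ : ∀ m ≤ n + j, δ m ≤ c) (hpre : ∀ m < n, β m < lam) :
    (Finset.range (n + j + 1)).sup β < lam + (j + 1) * c := by
  have hlayer : ∀ i ≤ j, β (n + i) < lam + (i + 1) * c := by
    intro i
    induction i with
    | zero =>
      intro _
      rw [add_zero, Nat.cast_zero, zero_add, one_mul]
      rcases n with _ | n
      · calc β 0 ≤ c := hroot.trans (hδ 0 (Nat.zero_le _))
          _ < lam + c := lt_add_of_pos_left c hlam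
      · calc β (n + 1) ≤ β n + δ (n + 1) := hstep n (by omega)
          _ < lam + c := add_lt_add_of_lt_of_le (hpre n (by omega)) (hδ (n + 1) (by omega))
    | succ i ih =>
      intro hi
      calc β (n + (i + 1)) ≤ β (n + i) + δ (n + i + 1) := hstep (n + i) (by omega)
        _ < lam + (i + 1) * c + c := add_lt_add_of_lt_of_le (ih (by omega)) (hδ _ (by omega))
        _ = lam + ((i + 1 : ℕ) + 1) * c := by push_cast; ring
  rw [Finset.sup_lt_iff (hlam.trans_le le_self_add)]
  intro m hm
  rw [Finset.mem_range] at hm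
  rcases lt_or_ge m n with hmn | hmn
  · exact (hpre m hmn).trans_le le_self_add
  · obtain ⟨i, rfl⟩ := Nat.exists_eq_add_of_le hmn
    refine (hlayer i (by omega)).trans_le ?_
    gcongr
    exact_mod_cast (by omega : i ≤ j)

lemma ancestralMax_lt_add_mul {bnode dnode : ℕ → ℕ → ℝ≥0}
    (hrec : ∀ n k : ℕ, k < 2 ^ (n + 1) → bnode (n + 1) k ≤ bnode n (k / 2) + dnode (n + 1) k)
    (hroot : bnode 0 0 ≤ dnode 0 0) {lam : ℝ≥0} (hlam : 0 < lam) {n j k : ℕ}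
    (hk : k < 2 ^ (n + j)) (hpre : ∀ m < n, bnode m (k / 2 ^ (n + j - m)) < lam) :
    ancestralMax bnode (n + j) k < lam + (j + 1) * ancestralMax dnode (n + j) k := by
  refine sup_range_lt_add_mul hlam ?_ (fun m hm => ?_)
    (fun m hm => Finset.le_sup (f := fun m => dnode m (k / 2 ^ (n + j - m))) (b := m)
      (Finset.mem_range.mpr (by omega))) hpre
  · rw [Nat.sub_zero, Nat.div_eq_of_lt hk]; exact hroot
  · have hq : k / 2 ^ (n + j - (m + 1)) < 2 ^ (m + 1) := by
      rw [Nat.div_lt_iff_lt_mul (by positivity), ← pow_add]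
      rwa [show m + 1 + (n + j - (m + 1)) = n + j by omega]
    have hhalf : k / 2 ^ (n + j - (m + 1)) / 2 = k / 2 ^ (n + j - m) := by
      rw [Nat.div_div_eq_div_mul, ← pow_succ, show n + j - (m + 1) + 1 = n + j - m by omega]
    simpa only [hhalf] using hrec m _ hq

lemma add_mul_le_mul_of_le_sub {lam alpha gamma : ℝ≥0} {j : ℕ}
    (hj : ((j : ℝ) + 1) * gamma ≤ alpha - 1) : lam + (j + 1) * (gamma * lam) ≤ alpha * lam := by
  rw [← NNReal.coe_le_coe]
  push_cast
  nlinarith [lam.coe_nonneg]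

lemma subset_carlesonDescendants {bnode dnode : ℕ → ℕ → ℝ≥0}
    (hrec : ∀ n k : ℕ, k < 2 ^ (n + 1) → bnode (n + 1) k ≤ bnode n (k / 2) + dnode (n + 1) k)
    (hroot : bnode 0 0 ≤ dnode 0 0) {B D : ℂ → ℝ≥0}
    (hB : ∀ n k : ℕ, k < 2 ^ n → ∀ z ∈ carlesonTop n k, B z = ancestralMax bnode n k)
    (hD : ∀ n k : ℕ, k < 2 ^ n → ∀ z ∈ carlesonTop n k, D z = ancestralMax dnode n k)
    {lam alpha gamma : ℝ≥0} (hlam : 0 < lam) {n k : ℕ} (hk : k < 2 ^ n)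
    (hpre : ∀ m < n, bnode m (k / 2 ^ (n - m)) < lam) (j : ℕ)
    (hj : (j : ℝ) * gamma < alpha - 1) :
    {z ∈ carlesonSq n k | alpha * lam ≤ B z ∧ D z ≤ gamma * lam} ⊆ carlesonDescendants n k j := by
  induction j with
  | zero => rw [carlesonDescendants_zero]; exact fun z hz => hz.1
  | succ j ih =>
    intro z hz
    obtain ⟨k', hk', hzk'⟩ := mem_iUnion₂.mp (ih (by push_cast at hj; nlinarith) hz)
    refine carlesonSq_diff_carlesonTop_subset_carlesonDescendants hk hk' ⟨hzk', fun hztop => ?_⟩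
    have hk'lt := lt_two_pow_add_of_div_eq hk hk'
    have hpre' : ∀ m < n, bnode m (k' / 2 ^ (n + j - m)) < lam := fun m hm => by
      rw [show n + j - m = j + (n - m) by omega, pow_add, ← Nat.div_div_eq_div_mul, hk']
      exact hpre m hm
    have hBlt := ancestralMax_lt_add_mul hrec hroot hlam hk'lt hpre'
    rw [← hB _ _ hk'lt z hztop, ← hD _ _ hk'lt z hztop] at hBlt
    refine (hz.2.1.trans_lt (hBlt.trans_le ?_)).false
    calc lam + (j + 1) * D z ≤ lam + (j + 1) * (gamma * lam) := by gcongr; exact hz.2.2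
      _ ≤ alpha * lam := add_mul_le_mul_of_le_sub (by exact_mod_cast hj.le)

theorem good_lambda_carleson_general (μ : Measure ℂ)
    (τ : ℝ) (hτ0 : 0 < τ) (hτ1 : τ < 1)
    (hμ : ∀ n k : ℕ, k < 2 ^ n →
      ENNReal.ofReal τ * μ (carlesonSq n k) ≤ μ (carlesonTop n k))
    (bnode dnode : ℕ → ℕ → ℝ≥0)
    (hrec : ∀ n k : ℕ, k < 2 ^ (n + 1) →
      bnode (n + 1) k ≤ bnode n (k / 2) + dnode (n + 1) k)
    (hroot : bnode 0 0 ≤ dnode 0 0)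
    (B D : ℂ → ℝ≥0)
    (hB : ∀ n k : ℕ, k < 2 ^ n → ∀ z ∈ carlesonTop n k,
      B z = (Finset.range (n + 1)).sup (fun m => bnode m (k / 2 ^ (n - m))))
    (hD : ∀ n k : ℕ, k < 2 ^ n → ∀ z ∈ carlesonTop n k,
      D z = (Finset.range (n + 1)).sup (fun m => dnode m (k / 2 ^ (n - m))))
    (lam alpha gamma : ℝ≥0) (hlam : 0 < lam) (halpha : 1 < alpha) (hgamma : 0 < gamma)
    (n k : ℕ) (hk : k < 2 ^ n)
    (hparent : n = 0 ∨ (Finset.range n).sup (fun m => bnode m (k / 2 ^ (n - m))) < lam) :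
    μ {z ∈ carlesonSq n k | alpha * lam ≤ B z ∧ D z ≤ gamma * lam} ≤
      ENNReal.ofReal ((1 - τ) ^ (⌈((alpha : ℝ) - 1) / (gamma : ℝ)⌉₊ - 1)) *
        μ (carlesonSq n k) := by
  rcases eq_or_ne (μ (carlesonSq n k)) ∞ with hinf | hfin
  · rw [hinf, ENNReal.mul_top (by simpa using pow_pos (sub_pos.mpr hτ1) _)]
    exact le_top
  have hpre : ∀ m < n, bnode m (k / 2 ^ (n - m)) < lam := fun m hm =>
    (hparent.resolve_left (by omega)).trans_le'
      (Finset.le_sup (f := fun m => bnode m (k / 2 ^ (n - m))) (Finset.mem_range.mpr hm))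
  set g := ⌈((alpha : ℝ) - 1) / gamma⌉₊ - 1
  have hg : (g : ℝ) * gamma < alpha - 1 := by
    have hx : 0 < ((alpha : ℝ) - 1) / gamma :=
      div_pos (sub_pos.mpr (by exact_mod_cast halpha)) (by exact_mod_cast hgamma)
    exact (lt_div_iff₀ (by exact_mod_cast hgamma)).mp
      (Nat.lt_ceil.mp (Nat.sub_one_lt (Nat.ceil_pos.mpr hx).ne'))
  calc μ {z ∈ carlesonSq n k | alpha * lam ≤ B z ∧ D z ≤ gamma * lam}
      ≤ μ (carlesonDescendants n k g) :=
        measure_mono (subset_carlesonDescendants hrec hroot hB hD hlam hk hpre g hg)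
    _ ≤ ENNReal.ofReal (1 - τ) ^ g * μ (carlesonSq n k) :=
        measure_carlesonDescendants_le μ hτ0.le hμ g hk hfin
    _ = ENNReal.ofReal ((1 - τ) ^ g) * μ (carlesonSq n k) := by
        rw [ENNReal.ofReal_pow (sub_nonneg.mpr hτ1.le)]

/-- good-lambda inequality for the ancestral maxima `B`, `D` of functions
`b`, `d` on the dyadic Carleson tree satisfying `b(T) ≤ b(T(P(C))) + d(T)`, with respect
to a measure `μ` whose top halves carry at least a `τ` fraction of their squares. -/
theorem good_lambda_carleson (μ : Measure ℂ)
    (τ : ℝ) (hτ0 : 0 < τ) (hτ1 : τ < 1)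
    (hμ : ∀ n k : ℕ, k < 2 ^ n →
      ENNReal.ofReal τ * μ (carlesonSq n k) ≤ μ (carlesonTop n k))
    (bnode dnode : ℕ → ℕ → ℝ≥0)
    (hrec : ∀ n k : ℕ, k < 2 ^ (n + 1) →
      bnode (n + 1) k ≤ bnode n (k / 2) + dnode (n + 1) k)
    (hroot : bnode 0 0 ≤ dnode 0 0)
    (B D : ℂ → ℝ≥0)
    (hB : ∀ n k : ℕ, k < 2 ^ n → ∀ z ∈ carlesonTop n k,
      B z = (Finset.range (n + 1)).sup (fun m => bnode m (k / 2 ^ (n - m))))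
    (hD : ∀ n k : ℕ, k < 2 ^ n → ∀ z ∈ carlesonTop n k,
      D z = (Finset.range (n + 1)).sup (fun m => dnode m (k / 2 ^ (n - m))))
    (lam alpha gamma : ℝ≥0) (hlam : 0 < lam) (halpha : 1 < alpha) (hgamma : 0 < gamma)
    (n k : ℕ) (hk : k < 2 ^ n)
    (hBge : lam ≤ (Finset.range (n + 1)).sup (fun m => bnode m (k / 2 ^ (n - m))))
    (hparent : n = 0 ∨ (Finset.range n).sup (fun m => bnode m (k / 2 ^ (n - m))) < lam) :
    μ {z ∈ carlesonSq n k | alpha * lam ≤ B z ∧ D z ≤ gamma * lam} ≤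
      ENNReal.ofReal ((1 - τ) ^ (⌈((alpha : ℝ) - 1) / (gamma : ℝ)⌉₊ - 1)) *
        μ (carlesonSq n k) :=
  good_lambda_carleson_general μ τ hτ0 hτ1 hμ bnode dnode hrec hroot B D hB hD lam alpha gamma hlam
    halpha hgamma n k hk hparent
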